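/- arXiv:2501.19219 — 2 statements merged into one kernel-verified Lean document; each statement's English description precedes it below -/
import Mathlib

section
/- Every doubly stochastic matrix is a convex combination of permutation matrices (Birkhoff–von Neumann theorem). -/
/-- Birkhoff–von Neumann: every doubly stochastic matrix is a convex combination
of permutation matrices. -/
theorem birkhoff_von_neumann (n : ℕ) (M : Matrix (Fin n) (Fin n) ℝ)
    (hnonneg : ∀ i j, 0 ≤ M i j)
    (hrow : ∀ i, ∑ j, M i j = 1)
    (hcol : ∀ j, ∑ i, M i j = 1) :
    ∃ w : Equiv.Perm (Fin n) → ℝ,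
      (∀ σ, 0 ≤ w σ) ∧ (∑ σ, w σ = 1) ∧
      M = ∑ σ : Equiv.Perm (Fin n), w σ • σ.permMatrix ℝ := by
  obtain ⟨w, h1, h2, h3⟩ := exists_eq_sum_perm_of_mem_doublyStochastic
    (mem_doublyStochastic_iff_sum.2 ⟨fun {i j} => hnonneg i j, hrow, hcol⟩)
  exact ⟨w, h1, h2, h3.symm⟩
end

section
/- If an n × n nonnegative matrix M has all row sums and column sums at most 1 (doubly substochastic), then M can be written as a convex combination of subpermutation matrices (0–1 matrices with at most one 1 in each row and column). Equivalently, M is dominated entrywise by a convex combination of partial matchings. -/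
open Finset Matrix

/-- Restrict a permutation of `Fin n ⊕ Fin n` to a partial equivalence on the
left summand. -/
def permToSub {n : ℕ} (σ : Equiv.Perm (Fin n ⊕ Fin n)) : Fin n ≃. Fin n where
  toFun i := (σ (Sum.inl i)).getLeft?
  invFun j := (σ.symm (Sum.inl j)).getLeft?
  inv a b := by
    simp only [Option.mem_def, Sum.getLeft?_eq_some_iff]
    rw [Equiv.symm_apply_eq, eq_comm]

lemma permToSub_toMatrix {n : ℕ} (σ : Equiv.Perm (Fin n ⊕ Fin n)) (i j : Fin n) :
    ((permToSub σ).toMatrix : Matrix (Fin n) (Fin n) ℝ) i j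
      = (σ.permMatrix ℝ) (Sum.inl i) (Sum.inl j) := by
  have h : (permToSub σ) i = (σ (Sum.inl i)).getLeft? := rfl
  simp only [PEquiv.toMatrix_apply, h, Equiv.Perm.permMatrix,
    Equiv.toPEquiv_apply, Option.mem_def, Sum.getLeft?_eq_some_iff, Option.some.injEq]

/-- Doubly substochastic version of Birkhoff's theorem: every `n × n` nonnegative
matrix with all row and column sums at most 1 is a convex combination of
subpermutation matrices (matrices of partial matchings, represented as
`PEquiv.toMatrix` of partial equivalences). -/
theorem doubly_substochastic_convex_combination_subpermutations
    (n : ℕ) (M : Matrix (Fin n) (Fin n) ℝ)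
    (hnonneg : ∀ i j, 0 ≤ M i j)
    (hrow : ∀ i, ∑ j, M i j ≤ 1)
    (hcol : ∀ j, ∑ i, M i j ≤ 1) :
    ∃ (N : ℕ) (w : Fin N → ℝ) (P : Fin N → (Fin n ≃. Fin n)),
      (∀ t, 0 ≤ w t) ∧ (∑ t, w t = 1) ∧
      M = ∑ t, w t • ((P t).toMatrix : Matrix (Fin n) (Fin n) ℝ) := by
  -- Build the doubly stochastic completion on `Fin n ⊕ Fin n`.
  set D : Matrix (Fin n ⊕ Fin n) (Fin n ⊕ Fin n) ℝ := fun x y =>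
    match x, y with
    | Sum.inl i, Sum.inl j => M i j
    | Sum.inl i, Sum.inr j => if i = j then 1 - ∑ k, M i k else 0
    | Sum.inr i, Sum.inl j => if i = j then 1 - ∑ k, M k j else 0
    | Sum.inr i, Sum.inr j => M j i
    with hD
  have hDmem : D ∈ doublyStochastic ℝ (Fin n ⊕ Fin n) := by
    rw [mem_doublyStochastic_iff_sum]
    refine ⟨?_, ?_, ?_⟩
    · rintro (i | i) (j | j)
      · exact hnonneg _ _
      · show (0:ℝ) ≤ if i = j then 1 - ∑ k, M i k else 0
        split
        · linarith [hrow i]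
        · exact le_refl 0
      · show (0:ℝ) ≤ if i = j then 1 - ∑ k, M k j else 0
        split
        · linarith [hcol j]
        · exact le_refl 0
      · exact hnonneg _ _
    · rintro (i | i) <;>
        simp only [hD, Fintype.sum_sum_type, Finset.sum_ite_eq, Finset.sum_ite_eq',
          Finset.mem_univ, if_true] <;> ring
    · rintro (j | j) <;>
        simp only [hD, Fintype.sum_sum_type, Finset.sum_ite_eq, Finset.sum_ite_eq',
          Finset.mem_univ, if_true] <;> ring
  obtain ⟨w, hw0, hw1, hwD⟩ := exists_eq_sum_perm_of_mem_doublyStochastic hDmem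
  -- Reindex the permutations by `Fin N`.
  let e := (Fintype.equivFin (Equiv.Perm (Fin n ⊕ Fin n))).symm
  refine ⟨Fintype.card (Equiv.Perm (Fin n ⊕ Fin n)), fun t => w (e t),
    fun t => permToSub (e t), fun t => hw0 _, ?_, ?_⟩
  · rw [Equiv.sum_comp e w, hw1]
  · funext i j
    have h1 : M i j = D (Sum.inl i) (Sum.inl j) := rfl
    rw [h1, ← hwD]
    rw [← Equiv.sum_comp e (fun σ => w σ • σ.permMatrix ℝ)]
    simp only [Finset.sum_apply, Matrix.sum_apply, Matrix.smul_apply, smul_eq_mul,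
      permToSub_toMatrix]
end
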